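/- Let f ∈ k[[t]] arise as follows: x = Σ_{n≥0} e_n t^n is a formal power series over a field k of characteristic ≠ 2 satisfying t^2 = f(x) for a polynomial f with f(e_0) = 0 and f'(e_0) ≠ 0. Then e_n = 0 for all odd n, i.e., x is an even power series in t. -/

import Mathlib

/-!
The substitution `t ↦ -t` fixes `t ^ 2` and the constant term, so `x(-t)` is a second solution of
`t ^ 2 = f(x)` with constant term `e₀`. Since `f'(e₀) ≠ 0`, such a solution is unique
(Hensel's lemma in `k⟦t⟧`), hence `x(-t) = x(t)`, and as `2 ≠ 0` the odd coefficients vanish.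
-/

open Polynomial

namespace PowerSeries

variable {R : Type*} [CommRing R]

theorem constantCoeff_aeval (p : R[X]) (x : R⟦X⟧) :
    constantCoeff (Polynomial.aeval x p) = p.eval (constantCoeff x) := by
  rw [Polynomial.aeval_def, hom_eval₂, ← eval₂_id]
  congr 1

theorem rescale_aeval (a : R) (p : R[X]) (x : R⟦X⟧) :
    rescale a (Polynomial.aeval x p) = Polynomial.aeval (rescale a x) p := by
  rw [← coe_rescaleAlgHom, RingHom.coe_coe, aeval_algHom_apply]

theorem eq_of_aeval_eq {p : R[X]} {x y : R⟦X⟧} (hcc : constantCoeff x = constantCoeff y)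
    (hder : IsUnit (p.derivative.eval (constantCoeff y)))
    (h : Polynomial.aeval x p = Polynomial.aeval y p) : x = y := by
  -- Taylor: `p(x) - p(y) = (p'(y) + k (x - y)) (x - y)`, and the first factor is a unit.
  obtain ⟨k, hk⟩ := (p.map (algebraMap R R⟦X⟧)).binomExpansion y (x - y)
  rw [add_sub_cancel, eval_map_algebraMap, eval_map_algebraMap, derivative_map,
    eval_map_algebraMap, h] at hk
  have hunit : IsUnit (Polynomial.aeval y p.derivative + k * (x - y)) := by
    rw [isUnit_iff_constantCoeff, map_add, map_mul, map_sub, hcc, sub_self, mul_zero, add_zero,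
      constantCoeff_aeval]
    exact hder
  have hzero : (Polynomial.aeval y p.derivative + k * (x - y)) * (x - y) = 0 := by
    linear_combination -hk
  exact sub_eq_zero.mp (hunit.mul_right_eq_zero.mp hzero)

theorem coeff_eq_zero_of_rescale_neg_one_eq [NoZeroDivisors R] (h2 : (2 : R) ≠ 0) {x : R⟦X⟧}
    (hx : rescale (-1) x = x) {n : ℕ} (hn : Odd n) : coeff n x = 0 := by
  have h := congrArg (coeff n) hx
  rw [coeff_rescale, hn.neg_one_pow, neg_one_mul, neg_eq_iff_add_eq_zero, ← two_mul] at h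
  exact (mul_eq_zero.mp h).resolve_left h2

end PowerSeries

open PowerSeries

theorem stmt2_general {k : Type*} [Field k] (hchar : ringChar k ≠ 2)
    (f : Polynomial k) (x : PowerSeries k)
    (h1 : f.derivative.eval (PowerSeries.constantCoeff x) ≠ 0)
    (heq : (PowerSeries.X : PowerSeries k) ^ 2 = Polynomial.aeval x f) :
    ∀ n, Odd n → PowerSeries.coeff n x = 0 := by
  have hsolution : Polynomial.aeval (rescale (-1) x) f = Polynomial.aeval x f := by
    rw [← rescale_aeval, ← heq, map_pow, rescale_neg_one_X, neg_sq]
  have hcc : constantCoeff (rescale (-1) x) = constantCoeff x := by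
    rw [← coeff_zero_eq_constantCoeff_apply, ← coeff_zero_eq_constantCoeff_apply, coeff_rescale,
      pow_zero, one_mul]
  have heven : rescale (-1) x = x := eq_of_aeval_eq hcc h1.isUnit hsolution
  exact fun n hn => coeff_eq_zero_of_rescale_neg_one_eq (Ring.two_ne_zero hchar) heven hn

theorem stmt2 {k : Type*} [Field k] (hchar : ringChar k ≠ 2)
    (f : Polynomial k) (x : PowerSeries k)
    (h0 : f.eval (PowerSeries.constantCoeff x) = 0)
    (h1 : f.derivative.eval (PowerSeries.constantCoeff x) ≠ 0)
    (heq : (PowerSeries.X : PowerSeries k) ^ 2 = Polynomial.aeval x f) :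
    ∀ n, Odd n → PowerSeries.coeff n x = 0 :=
  stmt2_general hchar f x h1 heq
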